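/- arXiv:2509.01870 — 3 statements merged into one kernel-verified Lean document; each statement's English description precedes it below -/
import Mathlib

section
/- (Completeness direction of the SE characterization.) Let G = (A, Φ) be an n-player game on a finite arena A with objective profile Φ = (φ₁, …, φ_n), where every φ_i is a Muller objective, and let v = (v₁, …, v_n) ∈ {0,1}^n. Let I = [1,n], W = {i | v_i = 1}, L = {i | v_i = 0}, φ_W = ⋂_{i∈W} φ_i, φ_L = ⋃_{i∈L} φ_i, and A_v = ⋂_{w∈W} ⟨⟨I\{w}⟩⟩(φ_W ∪ φ_L ∪ ¬φ_w) ∩ ⋂_{l∈L} ⟨⟨I\{l}⟩⟩((φ_W ∪ φ_L) ∩ ¬φ_l). If there exists a secure equilibrium Σ at s with Pay_s^Σ(Φ) = v, then s ∈ A_v and there exists a play that starts at s, stays inside A_v forever, and belongs to φ_W ∩ ¬φ_L. -/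
/-- The set of states occurring infinitely often in the infinite sequence `ρ`. -/
def infOcc {S : Type*} (ρ : ℕ → S) : Set S := {t | ∀ N, ∃ k ≥ N, ρ k = t}

/-- Büchi objective: `inf(ρ) ∩ B ≠ ∅`. -/
def Buchi {S : Type*} (B : Set S) : Set (ℕ → S) := {ρ | (infOcc ρ ∩ B).Nonempty}

/-- co-Büchi objective: `inf(ρ) ∩ B = ∅`. -/
def CoBuchi {S : Type*} (B : Set S) : Set (ℕ → S) := {ρ | infOcc ρ ∩ B = ∅}

/-- Parity objective: the minimum color seen infinitely often is even. -/
def ParityObj {S : Type*} (p : S → ℕ) : Set (ℕ → S) :=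
  {ρ | Even (sInf (p '' infOcc ρ))}

/-- Streett objective given a set of pairs. -/
def Streett {S : Type*} (T : Set (Set S × Set S)) : Set (ℕ → S) :=
  ⋂ FG ∈ T, (CoBuchi FG.1 ∪ Buchi FG.2)

/-- Rabin objective given a set of pairs. -/
def Rabin {S : Type*} (R : Set (Set S × Set S)) : Set (ℕ → S) :=
  ⋃ FG ∈ R, (Buchi FG.1 ∩ CoBuchi FG.2)

/-- A Muller objective: membership depends only on the set of states visited infinitely often. -/
def IsMuller {S : Type*} (φ : Set (ℕ → S)) : Prop :=
  ∃ F : Set (Set S), φ = {ρ | infOcc ρ ∈ F}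


/-- An `n`-player game arena: the decomposition `(S_i)` of the state set is given by the
`owner` function, `E` is the transition relation, and every state has an `E`-successor. -/
structure Arena (n : ℕ) (S : Type*) where
  owner : S → Fin n
  E : S → S → Prop
  succ_exists : ∀ s, ∃ t, E s t

namespace Arena

variable {n : ℕ} {S : Type*}

/-- A play: an infinite `E`-path. -/
def IsPlay (A : Arena n S) (ρ : ℕ → S) : Prop := ∀ k, A.E (ρ k) (ρ (k + 1))

/-- A (total representation of a) strategy `σ : S* S_i → S`: given the history `h` and the
current state `s` (so the full finite sequence is `h · s`), it picks an `E`-successor of `s`. -/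
def IsStrategy (A : Arena n S) (σ : List S → S → S) : Prop :=
  ∀ h s, A.E s (σ h s)

/-- The history `ρ 0 … ρ (k-1)`. -/
def hist (ρ : ℕ → S) (k : ℕ) : List S := List.ofFn (fun j : Fin k => ρ j)

/-- The play `ρ` is consistent with strategy `σ` of player `i`: whenever the current state
belongs to player `i`, the next state is the one chosen by `σ`. -/
def Consistent (A : Arena n S) (i : Fin n) (σ : List S → S → S) (ρ : ℕ → S) : Prop :=
  ∀ k, A.owner (ρ k) = i → ρ (k + 1) = σ (hist ρ k) (ρ k)

/-- `Out_s(σ_i)`: plays starting at `s` consistent with player `i`'s strategy `σ`. -/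
def Out (A : Arena n S) (i : Fin n) (σ : List S → S → S) (s : S) : Set (ℕ → S) :=
  {ρ | ρ 0 = s ∧ A.IsPlay ρ ∧ A.Consistent i σ ρ}

/-- `Out_s(Σ_P)`: plays starting at `s` consistent with the strategies of all players in `P`. -/
def OutP (A : Arena n S) (P : Set (Fin n)) (σ : Fin n → List S → S → S) (s : S) :
    Set (ℕ → S) :=
  {ρ | ρ 0 = s ∧ A.IsPlay ρ ∧ ∀ i ∈ P, A.Consistent i (σ i) ρ}

/-- The winning region `⟨⟨P⟩⟩(φ)`: states from which the players in `P` have a strategy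
profile forcing `φ`. -/
def Win (A : Arena n S) (P : Set (Fin n)) (φ : Set (ℕ → S)) : Set S :=
  {s | ∃ σ : Fin n → List S → S → S,
    (∀ i ∈ P, A.IsStrategy (σ i)) ∧ A.OutP P σ s ⊆ φ}

/-- One step of unfolding a full strategy profile: extend the history and move to
the state chosen by the owner of the current state. -/
def step (A : Arena n S) (σ : Fin n → List S → S → S) : List S × S → List S × S :=
  fun hc => (hc.1 ++ [hc.2], σ (A.owner hc.2) hc.1 hc.2)

/-- `Out_s(Σ)` for a full strategy profile `Σ` is a unique play; `outcome` is that play. -/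
def outcome (A : Arena n S) (σ : Fin n → List S → S → S) (s : S) (k : ℕ) : S :=
  ((A.step σ)^[k] ([], s)).2

end Arena

/-- The payoff profile of a play `ρ` with respect to the objective profile `Φ`. -/
noncomputable def payoff {n : ℕ} {S : Type*} (Φ : Fin n → Set (ℕ → S)) (ρ : ℕ → S) :
    Fin n → Bool :=
  fun i => @decide (ρ ∈ Φ i) (Classical.propDecidable _)

/-- Player `i`'s preference order on payoff profiles. -/
def Pref {n : ℕ} (i : Fin n) (u u' : Fin n → Bool) : Prop :=
  u i < u' i ∨ (u i = u' i ∧ (∀ j, u' j ≤ u j) ∧ ∃ j, u' j < u j)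

namespace Arena

variable {n : ℕ} {S : Type*}

/-- `Σ` is a secure equilibrium at `s`: no player `i` has a deviation yielding a payoff
profile preferred by `i`. -/
def IsSE (A : Arena n S) (Φ : Fin n → Set (ℕ → S)) (σ : Fin n → List S → S → S)
    (s : S) : Prop :=
  ∀ i : Fin n, ¬ ∃ σ' : List S → S → S, A.IsStrategy σ' ∧
    Pref i (payoff Φ (A.outcome σ s)) (payoff Φ (A.outcome (Function.update σ i σ') s))

/-- `SE_v`: states at which some secure equilibrium yields the payoff profile `v`. -/
def SEset (A : Arena n S) (Φ : Fin n → Set (ℕ → S)) (v : Fin n → Bool) : Set S :=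
  {s | ∃ σ : Fin n → List S → S → S, (∀ i, A.IsStrategy (σ i)) ∧
    A.IsSE Φ σ s ∧ payoff Φ (A.outcome σ s) = v}

end Arena

/-- `φ_W = ⋂_{i ∈ W} φ_i` where `W = {i | v_i = 1}`. -/
def phiW {n : ℕ} {S : Type*} (Φ : Fin n → Set (ℕ → S)) (v : Fin n → Bool) : Set (ℕ → S) :=
  ⋂ i ∈ {i : Fin n | v i = true}, Φ i

/-- `φ_L = ⋃_{i ∈ L} φ_i` where `L = {i | v_i = 0}`. -/
def phiL {n : ℕ} {S : Type*} (Φ : Fin n → Set (ℕ → S)) (v : Fin n → Bool) : Set (ℕ → S) :=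
  ⋃ i ∈ {i : Fin n | v i = false}, Φ i

/-- The set `A_v` of states from which, for each player `i`, the other players can retaliate. -/
def Arena.Av {n : ℕ} {S : Type*} (A : Arena n S) (Φ : Fin n → Set (ℕ → S))
    (v : Fin n → Bool) : Set S :=
  (⋂ w ∈ {i : Fin n | v i = true},
      A.Win ({w}ᶜ) (phiW Φ v ∪ phiL Φ v ∪ (Φ w)ᶜ)) ∩
  (⋂ l ∈ {i : Fin n | v i = false},
      A.Win ({l}ᶜ) ((phiW Φ v ∪ phiL Φ v) ∩ (Φ l)ᶜ))

section Aux
variable {n : ℕ} {S : Type*}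

lemma aux_hist_succ (ρ : ℕ → S) (k : ℕ) : Arena.hist ρ (k+1) = Arena.hist ρ k ++ [ρ k] := by
  rw [Arena.hist, List.ofFn_succ']
  simp [Arena.hist, List.concat_eq_append]

lemma aux_hist_length (ρ : ℕ → S) (k : ℕ) : (Arena.hist ρ k).length = k := by
  simp [Arena.hist]

lemma aux_hist_congr {ρ π : ℕ → S} {k : ℕ} (h : ∀ m < k, ρ m = π m) :
    Arena.hist ρ k = Arena.hist π k := by
  unfold Arena.hist
  congr 1
  funext j
  exact h j j.isLt

lemma aux_iterate_fst (A : Arena n S) (σ : Fin n → List S → S → S) (s : S) (k : ℕ) :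
    ((A.step σ)^[k] ([], s)).1 = Arena.hist (A.outcome σ s) k := by
  induction k with
  | zero => simp [Arena.hist]
  | succ k ih =>
    rw [Function.iterate_succ_apply', aux_hist_succ]
    show ((A.step σ)^[k] ([], s)).1 ++ [((A.step σ)^[k] ([], s)).2] = _
    rw [ih]
    rfl

lemma aux_outcome_succ (A : Arena n S) (σ : Fin n → List S → S → S) (s : S) (k : ℕ) :
    A.outcome σ s (k+1) =
      σ (A.owner (A.outcome σ s k)) (Arena.hist (A.outcome σ s) k) (A.outcome σ s k) := by
  show ((A.step σ)^[k+1] ([], s)).2 = _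
  rw [Function.iterate_succ_apply']
  show σ (A.owner ((A.step σ)^[k] ([], s)).2) ((A.step σ)^[k] ([], s)).1 _ = _
  rw [aux_iterate_fst]
  rfl

lemma aux_outcome_isPlay (A : Arena n S) {σ : Fin n → List S → S → S}
    (hσ : ∀ i, A.IsStrategy (σ i)) (s : S) : A.IsPlay (A.outcome σ s) := by
  intro k
  rw [aux_outcome_succ]
  exact hσ _ _ _

lemma aux_outcome_consistent (A : Arena n S) (σ : Fin n → List S → S → S) (s : S)
    (i : Fin n) : A.Consistent i (σ i) (A.outcome σ s) := by
  intro k hk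
  rw [aux_outcome_succ, hk]

lemma aux_outcome_unique (A : Arena n S) {σ : Fin n → List S → S → S} {s : S} {π : ℕ → S}
    (h0 : π 0 = s) (hc : ∀ i, A.Consistent i (σ i) π) : ∀ k, π k = A.outcome σ s k := by
  intro k
  induction k using Nat.strong_induction_on with
  | _ k ih =>
    cases k with
    | zero => exact h0
    | succ k =>
      rw [hc (A.owner (π k)) k rfl, aux_outcome_succ,
        aux_hist_congr (fun m hm => ih m (Nat.lt_succ_of_lt hm)), ih k (Nat.lt_succ_self k)]

end Aux

lemma aux_win_mono {n : ℕ} {S : Type*} (A : Arena n S) (P : Set (Fin n))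
    {φ ψ : Set (ℕ → S)} (h : φ ⊆ ψ) : A.Win P φ ⊆ A.Win P ψ :=
  fun _ ⟨σ, h1, h2⟩ => ⟨σ, h1, h2.trans h⟩

lemma aux_deviation {n : ℕ} {S : Type*} (A : Arena n S) (Φ : Fin n → Set (ℕ → S))
    (σ : Fin n → List S → S → S) (hσ : ∀ i, A.IsStrategy (σ i)) (s : S)
    (hse : A.IsSE Φ σ s) (k : ℕ) (i : Fin n) :
    A.outcome σ s k ∈ A.Win ({i}ᶜ) {ρ' | ∃ π : ℕ → S, infOcc π = infOcc ρ' ∧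
      ¬ Pref i (payoff Φ (A.outcome σ s)) (payoff Φ π)} := by
  classical
  set ρ := A.outcome σ s with hρdef
  have hplay : A.IsPlay ρ := aux_outcome_isPlay A hσ s
  refine ⟨fun j h t => σ j (Arena.hist ρ k ++ h) t, fun j _ h t => hσ j _ t, ?_⟩
  rintro ρ' ⟨h0', hplay', hcons'⟩
  set π : ℕ → S := fun m => if m < k then ρ m else ρ' (m - k) with hπ
  have hπ_le : ∀ m ≤ k, π m = ρ m := by
    intro m hm
    rcases lt_or_eq_of_le hm with h | h
    · simp [hπ, h]
    · subst h
      simp [hπ, h0']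
  have hπ_ge : ∀ t, π (k + t) = ρ' t := by
    intro t
    simp only [hπ]
    rw [if_neg (by omega)]
    congr 1
    omega
  have hhist : ∀ t, Arena.hist π (k + t) = Arena.hist ρ k ++ Arena.hist ρ' t := by
    intro t
    induction t with
    | zero => simpa [Arena.hist] using aux_hist_congr (fun m hm => hπ_le m hm.le)
    | succ t ih =>
      rw [show k + (t+1) = (k + t) + 1 from rfl, aux_hist_succ, ih, hπ_ge,
        aux_hist_succ, List.append_assoc]
  have hπ_play : A.IsPlay π := by
    intro m
    rcases le_or_gt (m+1) k with h | h
    · rw [hπ_le m (Nat.le_of_succ_le h), hπ_le (m+1) h]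
      exact hplay m
    · obtain ⟨t, rfl⟩ : ∃ t, m = k + t := ⟨m - k, by omega⟩
      rw [hπ_ge, show k + t + 1 = k + (t+1) from rfl, hπ_ge]
      exact hplay' t
  have hπ_cons : ∀ j, j ≠ i → A.Consistent j (σ j) π := by
    intro j hj m hown
    rcases le_or_gt (m+1) k with h | h
    · have hm := Nat.le_of_succ_le h
      rw [hπ_le m hm] at hown
      rw [hπ_le (m+1) h, hπ_le m hm,
        aux_hist_congr (fun m' hm' => hπ_le m' (le_of_lt (lt_of_lt_of_le hm' hm)))]
      exact aux_outcome_consistent A σ s j m hown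
    · obtain ⟨t, rfl⟩ : ∃ t, m = k + t := ⟨m - k, by omega⟩
      rw [hπ_ge] at hown
      rw [show k + t + 1 = k + (t+1) from rfl, hπ_ge, hπ_ge, hhist]
      exact hcons' j (Set.mem_compl_singleton_iff.mpr hj) t hown
  set σ' : List S → S → S := fun h t =>
    if h = Arena.hist π h.length ∧ t = π h.length then π (h.length + 1)
    else (A.succ_exists t).choose with hσ'def
  have hσ'_strat : A.IsStrategy σ' := by
    intro h t
    simp only [hσ'def]
    split
    · next hc =>
      rw [hc.2]
      exact hπ_play h.length
    · exact (A.succ_exists t).choose_spec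
  have hπ_cons_i : A.Consistent i σ' π := by
    intro m hown
    have : σ' (Arena.hist π m) (π m) = π (m + 1) := by
      simp [hσ'def, aux_hist_length]
    rw [this]
  have hupd_cons : ∀ j, A.Consistent j (Function.update σ i σ' j) π := by
    intro j
    rcases eq_or_ne j i with rfl | hj
    · rw [Function.update_self]
      exact hπ_cons_i
    · rw [Function.update_of_ne hj]
      exact hπ_cons j hj
  have hπ0 : π 0 = s := by
    rw [hπ_le 0 (Nat.zero_le k)]
    rfl
  have hπ_eq : π = A.outcome (Function.update σ i σ') s :=
    funext (aux_outcome_unique A hπ0 hupd_cons)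
  refine ⟨π, ?_, ?_⟩
  · ext t
    constructor
    · intro h N
      obtain ⟨m, hm, hmt⟩ := h (N + k)
      refine ⟨m - k, by omega, ?_⟩
      rw [← hπ_ge (m - k)]
      rwa [show k + (m - k) = m from by omega]
    · intro h N
      obtain ⟨m, hm, hmt⟩ := h N
      refine ⟨k + m, by omega, ?_⟩
      rw [hπ_ge]
      exact hmt
  · intro hpref
    exact hse i ⟨σ', hσ'_strat, by rw [← hπ_eq]; exact hpref⟩

/-- Completeness direction of the SE characterization (Muller objectives): if there is a
secure equilibrium at `s` with payoff profile `v`, then `s ∈ A_v` and some play from `s`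
stays in `A_v` forever and belongs to `φ_W ∩ ¬φ_L`. -/
theorem play_of_mem_SEset {n : ℕ} {S : Type*} [Fintype S]
    (A : Arena n S) (Φ : Fin n → Set (ℕ → S)) (hM : ∀ i, IsMuller (Φ i))
    (v : Fin n → Bool) (s : S)
    (hSE : ∃ σ : Fin n → List S → S → S, (∀ i, A.IsStrategy (σ i)) ∧
      A.IsSE Φ σ s ∧ payoff Φ (A.outcome σ s) = v) :
    s ∈ A.Av Φ v ∧ ∃ ρ : ℕ → S, ρ 0 = s ∧ A.IsPlay ρ ∧
      (∀ k, ρ k ∈ A.Av Φ v) ∧ ρ ∈ phiW Φ v ∩ (phiL Φ v)ᶜ := by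
  classical
  obtain ⟨σ, hσ, hse, hpay⟩ := hSE
  set ρ := A.outcome σ s with hρdef
  have hmem : ∀ j : Fin n, ρ ∈ Φ j ↔ v j = true := by
    intro j
    rw [← hpay]
    simp [payoff]
  have hAv : ∀ k, ρ k ∈ A.Av Φ v := by
    intro k
    constructor
    · -- winners
      simp only [Set.mem_iInter, Set.mem_setOf_eq]
      intro w hw
      refine aux_win_mono A _ ?_ (aux_deviation A Φ σ hσ s hse k w)
      rintro ρ' ⟨π, hinf, hnp⟩
      have htr : ∀ j, π ∈ Φ j ↔ ρ' ∈ Φ j := by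
        intro j
        obtain ⟨F, hF⟩ := hM j
        rw [hF]
        simp [Set.mem_setOf_eq, hinf]
      have hu : ∀ j, payoff Φ π j = true ↔ ρ' ∈ Φ j := by
        intro j
        simp [payoff, htr j]
      by_contra hmemc
      apply hnp
      rw [← hρdef, hpay]
      simp only [Set.mem_union, Set.mem_compl_iff, not_or, not_not] at hmemc
      obtain ⟨⟨hW, hL⟩, hw3⟩ := hmemc
      simp only [phiW, Set.mem_iInter, Set.mem_setOf_eq, not_forall] at hW
      obtain ⟨j, hjv, hjnot⟩ := hW
      simp only [phiL, Set.mem_iUnion, Set.mem_setOf_eq, not_exists] at hL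
      refine Or.inr ⟨by rw [hw, (hu w).mpr hw3], fun j' => ?_, j, ?_⟩
      · cases hvj' : v j' with
        | true => exact Bool.le_true _
        | false =>
          have h1 : ρ' ∉ Φ j' := by
            intro hc
            exact hL j' hvj' hc
          have h2 : payoff Φ π j' = false := by
            simp [payoff, htr j', h1]
          simp [h2]
      · rw [Bool.lt_iff]
        refine ⟨?_, hjv⟩
        simp [payoff, htr j, hjnot]
    · -- losers
      simp only [Set.mem_iInter, Set.mem_setOf_eq]
      intro l hl
      refine aux_win_mono A _ ?_ (aux_deviation A Φ σ hσ s hse k l)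
      rintro ρ' ⟨π, hinf, hnp⟩
      have htr : ∀ j, π ∈ Φ j ↔ ρ' ∈ Φ j := by
        intro j
        obtain ⟨F, hF⟩ := hM j
        rw [hF]
        simp [Set.mem_setOf_eq, hinf]
      have hu : ∀ j, payoff Φ π j = true ↔ ρ' ∈ Φ j := by
        intro j
        simp [payoff, htr j]
      by_contra hmemc
      apply hnp
      rw [← hρdef, hpay]
      rw [Set.mem_inter_iff, not_and_or] at hmemc
      rcases hmemc with h12 | h3
      · simp only [Set.mem_union, not_or] at h12
        obtain ⟨hW, hL⟩ := h12
        simp only [phiW, Set.mem_iInter, Set.mem_setOf_eq, not_forall] at hW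
        obtain ⟨j, hjv, hjnot⟩ := hW
        simp only [phiL, Set.mem_iUnion, Set.mem_setOf_eq, not_exists] at hL
        have hll : ρ' ∉ Φ l := by
          intro hc
          exact hL l hl hc
        refine Or.inr ⟨?_, fun j' => ?_, j, ?_⟩
        · rw [hl]
          symm
          simp [payoff, htr l, hll]
        · cases hvj' : v j' with
          | true => exact Bool.le_true _
          | false =>
            have h1 : ρ' ∉ Φ j' := by
              intro hc
              exact hL j' hvj' hc
            have h2 : payoff Φ π j' = false := by
              simp [payoff, htr j', h1]
            simp [h2]
        · rw [Bool.lt_iff]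
          refine ⟨?_, hjv⟩
          simp [payoff, htr j, hjnot]
      · rw [Set.mem_compl_iff, not_not] at h3
        left
        rw [Bool.lt_iff]
        refine ⟨hl, (hu l).mpr h3⟩
  refine ⟨hAv 0, ρ, rfl, aux_outcome_isPlay A hσ s, hAv, ?_, ?_⟩
  · simp only [phiW, Set.mem_iInter, Set.mem_setOf_eq]
    intro j hj
    exact (hmem j).mpr hj
  · intro hc
    simp only [phiL, Set.mem_iUnion, Set.mem_setOf_eq] at hc
    obtain ⟨j, hj, hjm⟩ := hc
    rw [(hmem j).mp hjm] at hj
    exact Bool.noConfusion hj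
end

section
/- (Profitable deviation outside A_v.) Let G = (A, Φ) be an n-player game on a finite arena A with objective profile Φ = (φ₁, …, φ_n), where every φ_i is a Muller objective, and let v = (v₁, …, v_n) ∈ {0,1}^n. Let I = [1,n], W = {i | v_i = 1}, L = {i | v_i = 0}, φ_W = ⋂_{i∈W} φ_i, φ_L = ⋃_{i∈L} φ_i, and A_v = ⋂_{w∈W} ⟨⟨I\{w}⟩⟩(φ_W ∪ φ_L ∪ ¬φ_w) ∩ ⋂_{l∈L} ⟨⟨I\{l}⟩⟩((φ_W ∪ φ_L) ∩ ¬φ_l). If s ∈ S \ A_v, then there exists a player i ∈ I and a strategy σ'_i of player i such that for every strategy profile Σ^{-i} of the players I \ {i}, the payoff profile u of the unique play in Out_s((σ'_i, Σ^{-i})) satisfies v ≺_i u. -/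
/-!
If `s ∉ A_v`, there is a player `i` such that the coalition of the other players cannot force,
from `s`, the objective `ψ_i` occurring in the definition of `A_v`. As a Boolean combination of
Muller objectives `ψ_i` is Muller, and Muller games on finite arenas are determined, so player
`i` can force `¬ψ_i`; and `i` prefers the payoff profile of every play in `¬ψ_i` to `v`.

Determinacy is McNaughton's induction on the subarena `U`, say with `U ∈ G` (otherwise swap the
players). The opponent wins on the attractor `A` of her winning region. Off `A` the other player
wins: if `A` is nonempty by induction on `U \ A`, since an opponent win there could only escape
into `A`; if `A` is empty by a round robin over the states of `U`, each subgame
`U \ attr {y}` being won by induction.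
-/

open Set Function

namespace Arena

variable {n : ℕ} {S : Type*}

lemma hist_zero (ρ : ℕ → S) : hist ρ 0 = [] := rfl

lemma hist_succ (ρ : ℕ → S) (k : ℕ) : hist ρ (k + 1) = hist ρ k ++ [ρ k] := by
  simp only [hist, List.ofFn_succ']
  simp [List.concat_eq_append]

lemma hist_add (ρ : ℕ → S) (t m : ℕ) :
    hist ρ (t + m) = hist ρ t ++ hist (fun j => ρ (t + j)) m := by
  induction m with
  | zero => simp [hist_zero]
  | succ m ih => rw [← Nat.add_assoc, hist_succ, ih, hist_succ, List.append_assoc]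

lemma mem_hist {ρ : ℕ → S} {k : ℕ} {x : S} : x ∈ hist ρ k ↔ ∃ j < k, ρ j = x := by
  simp [hist, List.mem_ofFn, Fin.exists_iff]

lemma step_iterate (A : Arena n S) (σ : Fin n → List S → S → S) (s : S) (k : ℕ) :
    (A.step σ)^[k] ([], s) = (hist (A.outcome σ s) k, A.outcome σ s k) := by
  induction k with
  | zero => rfl
  | succ k ih =>
    refine Prod.ext ?_ rfl
    rw [iterate_succ_apply', ih, hist_succ]
    rfl

lemma outcome_succ (A : Arena n S) (σ : Fin n → List S → S → S) (s : S) (k : ℕ) :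
    A.outcome σ s (k + 1) =
      σ (A.owner (A.outcome σ s k)) (hist (A.outcome σ s) k) (A.outcome σ s k) := by
  show ((A.step σ)^[k + 1] ([], s)).2 = _
  rw [iterate_succ_apply', step_iterate]
  rfl

end Arena

lemma infOcc_comp_add {S : Type*} (ρ : ℕ → S) (t : ℕ) :
    infOcc (fun m => ρ (t + m)) = infOcc ρ := by
  ext x
  constructor
  · rintro h N
    obtain ⟨k, hk, rfl⟩ := h N
    exact ⟨t + k, by omega, rfl⟩
  · rintro h N
    obtain ⟨k, hk, rfl⟩ := h (t + N)
    exact ⟨k - t, by omega, by simp only [Nat.add_sub_cancel' (by omega : t ≤ k)]⟩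

namespace GameGraph

/-! A two-player game on the graph `E`: one player moves at the states of `D`, the opponent at
those of `Dᶜ`, and play is confined to a subarena `U`. -/

variable {S : Type*}

section Defs

variable (E : S → S → Prop)

def IsSubarena (U : Set S) : Prop := ∀ s ∈ U, ∃ t ∈ U, E s t

def IsStrategyIn (U : Set S) (f : List S → S → S) : Prop :=
  ∀ h, ∀ s ∈ U, f h s ∈ U ∧ E s (f h s)

def IsPlayIn (U : Set S) (ρ : ℕ → S) : Prop := ∀ k, ρ k ∈ U ∧ E (ρ k) (ρ (k + 1))

def ConsistentOn (D : Set S) (f : List S → S → S) (ρ : ℕ → S) : Prop :=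
  ∀ k, ρ k ∈ D → ρ (k + 1) = f (Arena.hist ρ k) (ρ k)

def Wins (U D : Set S) (G : Set (Set S)) (f : List S → S → S) (s : S) : Prop :=
  ∀ ρ, ρ 0 = s → IsPlayIn E U ρ → ConsistentOn D f ρ → infOcc ρ ∈ G

def WinOn (U D : Set S) (G : Set (Set S)) (s : S) : Prop :=
  ∃ f, IsStrategyIn E U f ∧ Wins E U D G f s

def attrN (U D T : Set S) : ℕ → Set S
  | 0 => T ∩ U
  | n + 1 => attrN U D T n ∪ {s | s ∈ U ∧ ((s ∈ D ∧ ∃ t ∈ attrN U D T n, E s t) ∨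
      (s ∉ D ∧ ∀ t ∈ U, E s t → t ∈ attrN U D T n))}

def attr (U D T : Set S) : Set S := ⋃ n, attrN E U D T n

def IsAttrStrategy (U D T : Set S) (a : S → S) : Prop :=
  (∀ s ∈ U, a s ∈ U ∧ E s (a s)) ∧
    ∀ n, ∀ s ∈ D, s ∈ attrN E U D T (n + 1) → s ∉ attrN E U D T n → a s ∈ attrN E U D T n

end Defs

variable {E : S → S → Prop} {U D T : Set S} {G : Set (Set S)}

lemma IsPlayIn.shift {ρ : ℕ → S} (hρ : IsPlayIn E U ρ) (t : ℕ) :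
    IsPlayIn E U (fun m => ρ (t + m)) :=
  fun m => hρ (t + m)

lemma IsSubarena.exists_isStrategyIn (hU : IsSubarena E U) : ∃ f, IsStrategyIn E U f := by
  have : ∀ s, ∃ t, s ∈ U → t ∈ U ∧ E s t := fun s => by
    by_cases hs : s ∈ U
    · exact (hU s hs).imp fun _ ht _ => ht
    · exact ⟨s, fun h => (hs h).elim⟩
  choose f hf using this
  exact ⟨fun _ => f, fun _ s hs => hf s hs⟩

lemma exists_isStrategyIn_wins {X : Set S} (hU : IsSubarena E U)
    (h : ∀ e ∈ X, WinOn E U D G e) :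
    ∃ g : S → List S → S → S, (∀ e, IsStrategyIn E U (g e)) ∧ ∀ e ∈ X, Wins E U D G (g e) e := by
  obtain ⟨f, hf⟩ := hU.exists_isStrategyIn
  have : ∀ e, ∃ g, IsStrategyIn E U g ∧ (e ∈ X → Wins E U D G g e) := fun e => by
    by_cases he : e ∈ X
    · exact (h e he).imp fun _ hg => ⟨hg.1, fun _ => hg.2⟩
    · exact ⟨f, hf, fun h => (he h).elim⟩
  choose g hg using this
  exact ⟨g, fun e => (hg e).1, fun e he => (hg e).2 he⟩

section Attractor

variable {s t : S}

lemma attrN_mono : Monotone (attrN E U D T) :=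
  monotone_nat_of_le_succ fun _ => subset_union_left

lemma attrN_subset : ∀ n, attrN E U D T n ⊆ U
  | 0 => inter_subset_right
  | n + 1 => union_subset (attrN_subset n) fun _ hs => hs.1

lemma inter_subset_attr : T ∩ U ⊆ attr E U D T := subset_iUnion (attrN E U D T) 0

lemma mem_attr_of_succ_mem (hs : s ∈ U) (hsD : s ∈ D) (ht : t ∈ attr E U D T) (hst : E s t) :
    s ∈ attr E U D T := by
  obtain ⟨n, hn⟩ := mem_iUnion.1 ht
  exact mem_iUnion.2 ⟨n + 1, Or.inr ⟨hs, Or.inl ⟨hsD, t, hn, hst⟩⟩⟩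

lemma exists_attr_eq_attrN [Finite S] : ∃ N, attr E U D T = attrN E U D T N := by
  obtain ⟨N, hN⟩ := WellFoundedGT.monotone_chain_condition ⟨attrN E U D T, attrN_mono⟩
  refine ⟨N, (iUnion_subset fun m => ?_).antisymm (subset_iUnion _ N)⟩
  rcases le_total N m with h | h
  · exact (hN m h).ge
  · exact attrN_mono h

lemma mem_attr_of_forall_succ_mem [Finite S] (hs : s ∈ U) (hsD : s ∉ D)
    (h : ∀ t ∈ U, E s t → t ∈ attr E U D T) : s ∈ attr E U D T := by
  obtain ⟨N, hN⟩ := exists_attr_eq_attrN (E := E) (U := U) (D := D) (T := T)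
  rw [hN] at h
  exact subset_iUnion _ (N + 1) (Or.inr ⟨hs, Or.inr ⟨hsD, h⟩⟩)

lemma succ_mem_diff_attr (hs : s ∈ U \ attr E U D T) (hsD : s ∈ D) (ht : t ∈ U)
    (hst : E s t) : t ∈ U \ attr E U D T :=
  ⟨ht, fun h => hs.2 (mem_attr_of_succ_mem hs.1 hsD h hst)⟩

lemma IsSubarena.diff_attr [Finite S] (hU : IsSubarena E U) :
    IsSubarena E (U \ attr E U D T) := by
  intro s hs
  by_cases hsD : s ∈ D
  · obtain ⟨t, ht, hst⟩ := hU s hs.1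
    exact ⟨t, succ_mem_diff_attr hs hsD ht hst, hst⟩
  · by_contra! h
    exact hs.2 (mem_attr_of_forall_succ_mem hs.1 hsD fun t ht hst =>
      by_contra fun h' => h t ⟨ht, h'⟩ hst)

lemma attrN_level_unique {n m : ℕ} (hn : s ∈ attrN E U D T (n + 1)) (hn' : s ∉ attrN E U D T n)
    (hm : s ∈ attrN E U D T (m + 1)) (hm' : s ∉ attrN E U D T m) : n = m := by
  by_contra hne
  rcases Nat.lt_or_gt_of_ne hne with h | h
  · exact hm' (attrN_mono h hn)
  · exact hn' (attrN_mono h hm)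

lemma IsSubarena.exists_isAttrStrategy (hU : IsSubarena E U) : ∃ a, IsAttrStrategy E U D T a := by
  obtain ⟨f, hf⟩ := hU.exists_isStrategyIn
  have : ∀ s, ∃ t, (s ∈ U → t ∈ U ∧ E s t) ∧
      ∀ n, s ∈ D → s ∈ attrN E U D T (n + 1) → s ∉ attrN E U D T n → t ∈ attrN E U D T n := by
    intro s
    by_cases h : ∃ n, s ∈ D ∧ s ∈ attrN E U D T (n + 1) ∧ s ∉ attrN E U D T n
    · obtain ⟨n, hsD, hn, hn'⟩ := h
      obtain ⟨t, ht, hst⟩ : ∃ t ∈ attrN E U D T n, E s t := by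
        rcases hn with h | ⟨-, ⟨-, h⟩ | ⟨h, -⟩⟩
        · exact absurd h hn'
        · exact h
        · exact absurd hsD h
      exact ⟨t, fun _ => ⟨attrN_subset n ht, hst⟩,
        fun m _ hm hm' => attrN_level_unique hn hn' hm hm' ▸ ht⟩
    · push Not at h
      exact ⟨f [] s, hf [] s, fun n hsD hn hn' => absurd (h n hsD hn) hn'⟩
  choose a ha using this
  exact ⟨a, fun s hs => (ha s).1 hs, fun n s hsD => (ha s).2 n hsD⟩

lemma IsAttrStrategy.exists_mem {a : S → S} (ha : IsAttrStrategy E U D T a) {ρ : ℕ → S}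
    (hρ : IsPlayIn E U ρ) (h0 : ρ 0 ∈ attr E U D T)
    (hcons : ∀ k, ρ k ∈ D → ρ k ∈ attr E U D T → ρ k ∉ T → ρ (k + 1) = a (ρ k)) :
    ∃ k, ρ k ∈ T := by
  obtain ⟨n, hn⟩ := mem_iUnion.1 h0
  induction n generalizing ρ with
  | zero => exact ⟨0, hn.1⟩
  | succ n ih =>
    by_cases hT : ρ 0 ∈ T
    · exact ⟨0, hT⟩
    by_cases hn' : ρ 0 ∈ attrN E U D T n
    · exact ih hρ h0 hcons hn'
    have h1 : ρ 1 ∈ attrN E U D T n := by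
      by_cases hD : ρ 0 ∈ D
      · rw [hcons 0 hD h0 hT]
        exact ha.2 n _ hD hn hn'
      · rcases hn with h | ⟨-, ⟨h, -⟩ | ⟨-, h⟩⟩
        · exact absurd h hn'
        · exact absurd h hD
        · exact h _ (hρ 1).1 (hρ 0).2
    obtain ⟨k, hk⟩ := ih (hρ.shift 1) (subset_iUnion _ n h1) (fun k => hcons (1 + k)) h1
    exact ⟨1 + k, hk⟩

end Attractor

section Switching

open Classical

variable {ρ : ℕ → S} {t : ℕ}

def fromStart (g : S → List S → S → S) : List S → S → S := fun h s => g (h.headD s) h s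

/-- Play `f` until the first visit to `T`, at state `e` say, and from then on `g e`, fed with
the history since that visit. -/
noncomputable def switchAt (T : Set S) (f : List S → S → S) (g : S → List S → S → S) :
    List S → S → S := fun h s =>
  if h.dropWhile (· ∉ T) = [] ∧ s ∉ T then f h s else fromStart g (h.dropWhile (· ∉ T)) s

lemma fromStart_hist (g : S → List S → S → S) (ρ : ℕ → S) (k : ℕ) :
    fromStart g (Arena.hist ρ k) (ρ k) = g (ρ 0) (Arena.hist ρ k) (ρ k) := by
  cases k with
  | zero => rfl
  | succ k => simp [fromStart, Arena.hist, List.ofFn_succ]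

lemma switchAt_hist_of_forall_not_mem {f : List S → S → S} {g : S → List S → S → S} {k : ℕ}
    (h : ∀ j ≤ k, ρ j ∉ T) :
    switchAt T f g (Arena.hist ρ k) (ρ k) = f (Arena.hist ρ k) (ρ k) := by
  refine if_pos ⟨List.dropWhile_eq_nil_iff.2 fun x hx => ?_, h k le_rfl⟩
  obtain ⟨j, hj, rfl⟩ := Arena.mem_hist.1 hx
  simpa using h j hj.le

lemma switchAt_hist_add {f : List S → S → S} {g : S → List S → S → S} (ht : ρ t ∈ T)
    (hbefore : ∀ j < t, ρ j ∉ T) (m : ℕ) :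
    switchAt T f g (Arena.hist ρ (t + m)) (ρ (t + m)) =
      g (ρ t) (Arena.hist (fun j => ρ (t + j)) m) (ρ (t + m)) := by
  have hdrop : (Arena.hist ρ (t + m)).dropWhile (· ∉ T) = Arena.hist (fun j => ρ (t + j)) m := by
    rw [Arena.hist_add, List.dropWhile_append_of_pos]
    · cases m with
      | zero => rfl
      | succ m => simp [Arena.hist, List.ofFn_succ, ht]
    · intro x hx
      obtain ⟨j, hj, rfl⟩ := Arena.mem_hist.1 hx
      simpa using hbefore j hj
  rw [switchAt, hdrop, if_neg]
  · exact fromStart_hist g (fun j => ρ (t + j)) m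
  · rintro ⟨hnil, hm⟩
    cases m with
    | zero => exact hm ht
    | succ m => simp [Arena.hist] at hnil

lemma ConsistentOn.switchAt_cases {f : List S → S → S} {g : S → List S → S → S}
    (hρ : ConsistentOn D (switchAt T f g) ρ) :
    ((∀ k, ρ k ∉ T) ∧ ConsistentOn D f ρ) ∨
      ∃ t, ρ t ∈ T ∧ (∀ k < t, ρ k ∉ T ∧ (ρ k ∈ D → ρ (k + 1) = f (Arena.hist ρ k) (ρ k))) ∧
        ConsistentOn D (g (ρ t)) (fun m => ρ (t + m)) := by
  by_cases hT : ∃ k, ρ k ∈ T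
  · refine Or.inr ⟨Nat.find hT, Nat.find_spec hT, fun k hk => ⟨Nat.find_min hT hk, fun hD => ?_⟩,
      fun m hD => (hρ _ hD).trans
        (switchAt_hist_add (Nat.find_spec hT) (fun j => Nat.find_min hT) m)⟩
    rw [hρ k hD, switchAt_hist_of_forall_not_mem fun j hj => Nat.find_min hT (by omega)]
  · push Not at hT
    exact Or.inl ⟨hT, fun k hD => (hρ k hD).trans (switchAt_hist_of_forall_not_mem fun j _ => hT j)⟩

lemma isStrategyIn_switchAt {f : List S → S → S} {g : S → List S → S → S}
    (hf : ∀ h, ∀ s ∈ U, s ∉ T → f h s ∈ U ∧ E s (f h s)) (hg : ∀ e, IsStrategyIn E U (g e)) :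
    IsStrategyIn E U (switchAt T f g) := by
  intro h s hs
  unfold switchAt
  split_ifs with hc
  · exact hf h s hs hc.2
  · exact hg _ _ s hs

end Switching

section Winning

variable {s : S}

lemma winOn_of_mem_attr (hU : IsSubarena E U) (hT : ∀ e ∈ T ∩ U, WinOn E U D G e)
    (hs : s ∈ attr E U D T) : WinOn E U D G s := by
  obtain ⟨a, ha⟩ := hU.exists_isAttrStrategy (D := D) (T := T)
  obtain ⟨g, hgU, hgW⟩ := exists_isStrategyIn_wins hU hT
  refine ⟨switchAt T (fun _ => a) g, isStrategyIn_switchAt (fun _ x hx _ => ha.1 x hx) hgU, ?_⟩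
  intro ρ hρ0 hρ hcons
  rcases hcons.switchAt_cases with ⟨hnT, hcons'⟩ | ⟨t, ht, -, hcons'⟩
  · obtain ⟨k, hk⟩ := ha.exists_mem hρ (hρ0 ▸ hs) fun k hD _ _ => hcons' k hD
    exact absurd hk (hnT k)
  · simpa [infOcc_comp_add] using hgW (ρ t) ⟨ht, (hρ t).1⟩ _ rfl (hρ.shift t) hcons'

lemma WinOn.of_escape {R Q Esc : Set S} (h : WinOn E R Q G s) (hU : IsSubarena E U) (hRU : R ⊆ U)
    (hesc : ∀ x ∈ R, x ∉ Q → ∀ t ∈ U, E x t → t ∈ R ∪ Esc)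
    (hEsc : ∀ e ∈ Esc, WinOn E U Q G e) (hs : s ∈ R) : WinOn E U Q G s := by
  obtain ⟨σ, hσR, hσW⟩ := h
  obtain ⟨g, hgU, hgW⟩ := exists_isStrategyIn_wins hU hEsc
  refine ⟨switchAt Rᶜ σ g, isStrategyIn_switchAt (fun h x _ hx => ?_) hgU, ?_⟩
  · exact (hσR h x (not_not.1 hx)).imp_left (@hRU _)
  intro ρ hρ0 hρ hcons
  rcases hcons.switchAt_cases with ⟨hR, hcons'⟩ | ⟨t, ht, hbefore, hcons'⟩
  · exact hσW ρ hρ0 (fun k => ⟨not_not.1 (hR k), (hρ k).2⟩) hcons'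
  obtain ⟨k, rfl⟩ : ∃ k, t = k + 1 :=
    Nat.exists_eq_succ_of_ne_zero fun h0 => ht (h0 ▸ hρ0 ▸ hs)
  obtain ⟨hkR, hkcons⟩ := hbefore k k.lt_succ_self
  have hkR : ρ k ∈ R := not_not.1 hkR
  have hesc' : ρ (k + 1) ∈ Esc := by
    by_cases hkQ : ρ k ∈ Q
    · exact absurd (hkcons hkQ ▸ (hσR _ _ hkR).1) ht
    · exact (hesc _ hkR hkQ _ (hρ (k + 1)).1 (hρ k).2).resolve_left ht
  simpa [infOcc_comp_add] using hgW _ hesc' _ rfl (hρ.shift _) hcons'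

lemma WinOn.of_trap {R Q : Set S} (h : WinOn E R Q G s) (hU : IsSubarena E U) (hRU : R ⊆ U)
    (htrap : ∀ x ∈ R, x ∉ Q → ∀ t ∈ U, E x t → t ∈ R) (hs : s ∈ R) : WinOn E U Q G s :=
  h.of_escape hU hRU (Esc := ∅) (fun x hx hxQ t ht hxt => Or.inl (htrap x hx hxQ t ht hxt))
    (fun _ h => h.elim) hs

end Winning

section RoundRobin

open Classical

variable {T : ℕ → Set S} {ρ : ℕ → S}

/-- The memory of a round-robin strategy: the current phase `p` and the history since phase `p`
began. Phase `p` ends right after a visit to `T p`. -/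
noncomputable def phaseStep (T : ℕ → Set S) (m : ℕ × List S) (x : S) : ℕ × List S :=
  if x ∈ T m.1 then (m.1 + 1, []) else (m.1, m.2 ++ [x])

noncomputable def roundRobin (T : ℕ → Set S) (F : ℕ → List S → S → S) : List S → S → S :=
  fun h => let m := h.foldl (phaseStep T) (0, []); F m.1 m.2

noncomputable def phaseAt (T : ℕ → Set S) (ρ : ℕ → S) (k : ℕ) : ℕ × List S :=
  (Arena.hist ρ k).foldl (phaseStep T) (0, [])

lemma phaseAt_zero : phaseAt T ρ 0 = (0, []) := rfl

lemma phaseAt_succ (k : ℕ) : phaseAt T ρ (k + 1) = phaseStep T (phaseAt T ρ k) (ρ k) := by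
  rw [phaseAt, Arena.hist_succ, List.foldl_append]
  rfl

lemma phaseAt_fst_le (k : ℕ) : (phaseAt T ρ k).1 ≤ k := by
  induction k with
  | zero => simp [phaseAt_zero]
  | succ k ih =>
    rw [phaseAt_succ, phaseStep]
    split_ifs <;> dsimp only <;> omega

lemma phaseAt_find {p : ℕ} (hp : ∃ k, (phaseAt T ρ k).1 = p) :
    phaseAt T ρ (Nat.find hp) = (p, []) := by
  have hspec := Nat.find_spec hp
  cases hk : Nat.find hp with
  | zero =>
    rw [hk, phaseAt_zero] at hspec
    rw [← hspec, phaseAt_zero]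
  | succ k =>
    have hmin : (phaseAt T ρ k).1 ≠ p := Nat.find_min hp (by omega)
    rw [hk, phaseAt_succ, phaseStep] at hspec
    rw [phaseAt_succ, phaseStep]
    split_ifs at hspec ⊢
    · rw [← hspec]
    · exact absurd hspec hmin

/-- Along a play, either every phase ends, or some phase `P`, begun at time `t`, lasts forever. -/
lemma roundRobin_cases (F : ℕ → List S → S → S) (ρ : ℕ → S) :
    (∀ p, ∃ k ≥ p, ρ k ∈ T p) ∨
      ∃ P t, ∀ m, ρ (t + m) ∉ T P ∧ roundRobin T F (Arena.hist ρ (t + m)) (ρ (t + m)) =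
        F P (Arena.hist (fun j => ρ (t + j)) m) (ρ (t + m)) := by
  by_cases hall : ∀ p, ∃ k, (phaseAt T ρ k).1 = p
  · refine Or.inl fun p => ?_
    have hp := hall (p + 1)
    obtain ⟨k, hk⟩ : ∃ k, Nat.find hp = k + 1 :=
      Nat.exists_eq_succ_of_ne_zero fun h0 => by
        have h := Nat.find_spec hp
        rw [h0, phaseAt_zero] at h
        omega
    have hspec := Nat.find_spec hp
    have hmin : (phaseAt T ρ k).1 ≠ p + 1 := Nat.find_min hp (by omega)
    rw [hk, phaseAt_succ, phaseStep] at hspec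
    split_ifs at hspec with hT
    · have hkp : (phaseAt T ρ k).1 = p := by simpa using hspec
      exact ⟨k, hkp ▸ phaseAt_fst_le k, hkp ▸ hT⟩
    · exact absurd hspec hmin
  · push Not at hall
    have hq := Nat.find_spec hall
    obtain ⟨P, hP⟩ : ∃ P, Nat.find hall = P + 1 :=
      Nat.exists_eq_succ_of_ne_zero fun h0 => hq 0 (by rw [h0, phaseAt_zero])
    have hPat : ∃ k, (phaseAt T ρ k).1 = P := by
      simpa using Nat.find_min hall (show P < Nat.find hall by omega)
    rw [hP] at hq
    set t := Nat.find hPat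
    have hstay : ∀ m, phaseAt T ρ (t + m) = (P, Arena.hist (fun j => ρ (t + j)) m) →
        ρ (t + m) ∉ T P := fun m hm hT =>
      hq (t + m + 1) (by rw [phaseAt_succ, hm, phaseStep, if_pos hT])
    have hmem : ∀ m, phaseAt T ρ (t + m) = (P, Arena.hist (fun j => ρ (t + j)) m) := by
      intro m
      induction m with
      | zero => exact phaseAt_find hPat
      | succ m ih =>
        rw [← Nat.add_assoc, phaseAt_succ, ih, phaseStep, if_neg (hstay m ih), Arena.hist_succ]
    refine Or.inr ⟨P, t, fun m => ⟨hstay m (hmem m), ?_⟩⟩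
    show F (phaseAt T ρ (t + m)).1 (phaseAt T ρ (t + m)).2 (ρ (t + m)) = _
    rw [hmem m]

end RoundRobin

section Determinacy

lemma exists_seq_forall_frequently_eq {U : Set S} [Countable U] (hU : U.Nonempty) :
    ∃ c : ℕ → S, (∀ p, c p ∈ U) ∧ ∀ y ∈ U, ∀ N, ∃ p ≥ N, c p = y := by
  have := hU.to_subtype
  obtain ⟨f, hf⟩ := exists_surjective_nat U
  refine ⟨fun p => f p.unpair.1, fun p => (f _).2, fun y hy N => ?_⟩
  obtain ⟨a, ha⟩ := hf ⟨y, hy⟩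
  exact ⟨Nat.pair a N, Nat.right_le_pair a N, by simp [Nat.unpair_pair, ha]⟩

/-- Round robin: in phase `p` the `D`-player attracts the play to the `p`-th state of an
enumeration of `U` listing every state infinitely often, and outside that attractor she plays
her strategy for the subgame. Either every state is visited infinitely often, so that the play
wins by `U ∈ G`, or the play ends inside a single subgame. -/
lemma winOn_of_forall_winOn_diff_attr [Finite S] (hU : IsSubarena E U) (hUG : U ∈ G)
    (hsub : ∀ y ∈ U, ∀ e ∈ U \ attr E U D {y}, WinOn E (U \ attr E U D {y}) D G e)
    {s : S} (hs : s ∈ U) : WinOn E U D G s := by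
  classical
  obtain ⟨c, hcU, hc⟩ := exists_seq_forall_frequently_eq ⟨s, hs⟩
  set A : ℕ → Set S := fun p => attr E U D {c p}
  choose a ha using fun p => hU.exists_isAttrStrategy (D := D) (T := {c p})
  choose g hgV hgW using fun p =>
    exists_isStrategyIn_wins (hU.diff_attr (D := D) (T := {c p})) (hsub (c p) (hcU p))
  let F : ℕ → List S → S → S := fun p seg x => if x ∈ A p then a p x else fromStart (g p) seg x
  refine ⟨roundRobin (fun p => {c p}) F, fun h x hx => ?_, fun ρ hρ0 hρ hcons => ?_⟩
  · dsimp only [roundRobin, F]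
    split_ifs with hA
    · exact (ha _).1 x hx
    · exact (hgV _ _ _ x ⟨hx, hA⟩).imp_left (·.1)
  rcases roundRobin_cases (T := fun p => {c p}) F ρ with hall | ⟨P, t, hPt⟩
  · convert hUG
    refine Subset.antisymm (fun y hy => ?_) fun y hy N => ?_
    · obtain ⟨k, -, rfl⟩ := hy 0
      exact (hρ k).1
    · obtain ⟨p, hp, rfl⟩ := hc y hy N
      obtain ⟨k, hk, hkp⟩ := hall p
      exact ⟨k, by omega, hkp⟩
  have hF : ∀ m, ρ (t + m) ∈ D →
      ρ (t + m + 1) = F P (Arena.hist (fun j => ρ (t + j)) m) (ρ (t + m)) :=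
    fun m hD => (hcons _ hD).trans (hPt m).2
  have hout : ∀ m, ρ (t + m) ∉ A P := by
    intro m hm
    obtain ⟨j, hj⟩ := (ha P).exists_mem (hρ.shift (t + m)) hm fun j hD hA _ => by
      have h := hF (m + j)
      rw [← Nat.add_assoc] at h
      exact (h hD).trans (if_pos hA)
    exact (hPt (m + j)).1 (by rwa [← Nat.add_assoc])
  have hwin := hgW P (ρ t) ⟨(hρ t).1, hout 0⟩ _ rfl (fun m => ⟨⟨(hρ _).1, hout m⟩, (hρ _).2⟩)
    fun m hD => (hF m hD).trans ((if_neg (hout m)).trans (fromStart_hist _ _ m))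
  simpa [infOcc_comp_add] using hwin

lemma winOn_or_winOn_of_mem [Finite S] (hU : IsSubarena E U) (hUG : U ∈ G)
    (ih : ∀ V ⊂ U, IsSubarena E V → ∀ (D : Set S) (G : Set (Set S)),
      ∀ s ∈ V, WinOn E V D G s ∨ WinOn E V Dᶜ Gᶜ s)
    (s : S) (hs : s ∈ U) : WinOn E U D G s ∨ WinOn E U Dᶜ Gᶜ s := by
  set A := attr E U Dᶜ {x | WinOn E U Dᶜ Gᶜ x}
  have hA : ∀ x ∈ A, WinOn E U Dᶜ Gᶜ x := fun x => winOn_of_mem_attr hU fun e he => he.1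
  suffices hV : ∀ x ∈ U \ A, WinOn E U D G x by
    by_cases hsA : s ∈ A
    · exact Or.inr (hA s hsA)
    · exact Or.inl (hV s ⟨hs, hsA⟩)
  rcases (sdiff_subset : U \ A ⊆ U).ssubset_or_eq with hlt | heq
  · intro x hx
    refine (ih _ hlt hU.diff_attr D G x hx).elim
      (fun h => h.of_trap hU sdiff_subset
        (fun y hy hyD t ht hyt => succ_mem_diff_attr hy hyD ht hyt) hx)
      fun h => ?_
    have hx' : WinOn E U Dᶜ Gᶜ x := h.of_escape hU sdiff_subset
      (fun y _ _ t ht _ => (em (t ∈ A)).elim Or.inr fun htA => Or.inl ⟨ht, htA⟩) hA hx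
    exact (hx.2 (inter_subset_attr ⟨hx', hx.1⟩)).elim
  · intro x hx
    rw [heq] at hx
    refine winOn_of_forall_winOn_diff_attr hU hUG (fun y hy e he => ?_) hx
    have hlt : U \ attr E U D {y} ⊂ U := by
      refine sdiff_subset.ssubset_of_ne fun h => ?_
      have hy' : y ∈ U \ attr E U D {y} := h.symm ▸ hy
      exact hy'.2 (inter_subset_attr ⟨rfl, hy⟩)
    refine (ih _ hlt hU.diff_attr D G e he).resolve_right fun h => ?_
    have he' := h.of_trap hU sdiff_subset
      (fun z hz hzD t ht hzt => succ_mem_diff_attr hz (not_not.1 hzD) ht hzt) he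
    have heA : e ∈ U \ A := heq.symm ▸ he.1
    exact heA.2 (inter_subset_attr ⟨he', he.1⟩)

theorem winOn_or_winOn [Finite S] (U : Set S) (hU : IsSubarena E U) (D : Set S)
    (G : Set (Set S)) (s : S) (hs : s ∈ U) : WinOn E U D G s ∨ WinOn E U Dᶜ Gᶜ s := by
  induction U using WellFoundedLT.induction generalizing D G s with
  | _ U ih =>
    by_cases hUG : U ∈ G
    · exact winOn_or_winOn_of_mem hU hUG (fun V hV hV' => ih V hV hV') s hs
    · simpa only [compl_compl, or_comm] using
        winOn_or_winOn_of_mem hU (D := Dᶜ) (G := Gᶜ) hUG (fun V hV hV' => ih V hV hV') s hs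

end Determinacy

end GameGraph

open GameGraph

namespace Arena

variable {n : ℕ} {S : Type*} {A : Arena n S} {i : Fin n} {G : Set (Set S)} {s : S}

lemma exists_strategy_of_winOn (h : WinOn A.E univ {t | A.owner t = i} G s) :
    ∃ σ', A.IsStrategy σ' ∧ ∀ σ : Fin n → List S → S → S, (∀ j, j ≠ i → A.IsStrategy (σ j)) →
      infOcc (A.outcome (update σ i σ') s) ∈ G := by
  obtain ⟨f, hf, hwin⟩ := h
  refine ⟨f, fun h x => (hf h x trivial).2,
    fun σ hσ => hwin _ rfl (fun k => ⟨trivial, ?_⟩) fun k hk => ?_⟩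
  · rw [A.outcome_succ]
    by_cases ho : A.owner (A.outcome (update σ i f) s k) = i
    · rw [ho, update_self]
      exact (hf _ _ trivial).2
    · rw [update_of_ne ho]
      exact hσ _ ho _ _
  · rw [A.outcome_succ, show A.owner _ = i from hk, update_self]

lemma mem_win_of_winOn (h : WinOn A.E univ {t | A.owner t = i}ᶜ G s) :
    s ∈ A.Win {i}ᶜ {ρ | infOcc ρ ∈ G} := by
  obtain ⟨f, hf, hwin⟩ := h
  refine ⟨fun _ => f, fun _ _ h x => (hf h x trivial).2, ?_⟩
  rintro ρ ⟨hρ0, hρ, hcons⟩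
  exact hwin ρ hρ0 (fun k => ⟨trivial, hρ k⟩) fun k hk => hcons _ hk k rfl

theorem exists_deviation_of_not_mem_win [Finite S] {φ : Set (ℕ → S)} (hφ : IsMuller φ)
    (hs : s ∉ A.Win {i}ᶜ φ) :
    ∃ σ', A.IsStrategy σ' ∧ ∀ σ : Fin n → List S → S → S, (∀ j, j ≠ i → A.IsStrategy (σ j)) →
      A.outcome (update σ i σ') s ∉ φ := by
  obtain ⟨F, rfl⟩ := hφ
  have hU : IsSubarena A.E univ := fun s _ => (A.succ_exists s).imp fun _ h => ⟨trivial, h⟩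
  rcases winOn_or_winOn univ hU {t | A.owner t = i} Fᶜ s trivial with h | h
  · exact exists_strategy_of_winOn h
  · rw [compl_compl] at h
    exact absurd (mem_win_of_winOn h) hs

end Arena

section Muller

variable {S : Type*} {φ ψ : Set (ℕ → S)}

lemma isMuller_iff : IsMuller φ ↔ ∀ ρ ρ', infOcc ρ = infOcc ρ' → ρ ∈ φ → ρ' ∈ φ := by
  refine ⟨?_, fun h => ⟨infOcc '' φ, ?_⟩⟩
  · rintro ⟨F, rfl⟩ ρ ρ' he hρ
    exact (he ▸ hρ : infOcc ρ' ∈ F)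
  · ext ρ
    exact ⟨fun hρ => ⟨ρ, hρ, rfl⟩, fun ⟨ρ', hρ', he⟩ => h ρ' ρ he hρ'⟩

lemma IsMuller.compl (h : IsMuller φ) : IsMuller φᶜ := by
  obtain ⟨F, rfl⟩ := h
  exact ⟨Fᶜ, rfl⟩

lemma IsMuller.union (hφ : IsMuller φ) (hψ : IsMuller ψ) : IsMuller (φ ∪ ψ) := by
  obtain ⟨F, rfl⟩ := hφ
  obtain ⟨F', rfl⟩ := hψ
  exact ⟨F ∪ F', rfl⟩

lemma IsMuller.inter (hφ : IsMuller φ) (hψ : IsMuller ψ) : IsMuller (φ ∩ ψ) := by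
  obtain ⟨F, rfl⟩ := hφ
  obtain ⟨F', rfl⟩ := hψ
  exact ⟨F ∩ F', rfl⟩

lemma isMuller_biInter {ι : Type*} {P : Set ι} {Φ : ι → Set (ℕ → S)}
    (h : ∀ i ∈ P, IsMuller (Φ i)) : IsMuller (⋂ i ∈ P, Φ i) :=
  isMuller_iff.2 fun ρ ρ' he hρ =>
    mem_iInter₂.2 fun i hi => isMuller_iff.1 (h i hi) ρ ρ' he (mem_iInter₂.1 hρ i hi)

lemma isMuller_biUnion {ι : Type*} {P : Set ι} {Φ : ι → Set (ℕ → S)}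
    (h : ∀ i ∈ P, IsMuller (Φ i)) : IsMuller (⋃ i ∈ P, Φ i) :=
  isMuller_iff.2 fun ρ ρ' he hρ => by
    obtain ⟨i, hi, hρi⟩ := mem_iUnion₂.1 hρ
    exact mem_iUnion₂.2 ⟨i, hi, isMuller_iff.1 (h i hi) ρ ρ' he hρi⟩

end Muller

section Payoff

variable {n : ℕ} {S : Type*} {Φ : Fin n → Set (ℕ → S)} {v : Fin n → Bool} {ρ : ℕ → S}

lemma payoff_eq_true_iff {i : Fin n} : payoff Φ ρ i = true ↔ ρ ∈ Φ i := by
  simp [payoff]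

lemma payoff_eq_false_iff {i : Fin n} : payoff Φ ρ i = false ↔ ρ ∉ Φ i := by
  simp [payoff]

lemma payoff_le_of_not_mem_phiL (h : ρ ∉ phiL Φ v) (j : Fin n) : payoff Φ ρ j ≤ v j := by
  cases hv : v j
  · rw [payoff_eq_false_iff.2 fun hj => h (mem_iUnion₂.2 ⟨j, hv, hj⟩)]
  · exact Bool.le_true _

lemma exists_payoff_lt_of_not_mem_phiW (h : ρ ∉ phiW Φ v) : ∃ j, payoff Φ ρ j < v j := by
  obtain ⟨j, hv, hj⟩ : ∃ j, v j = true ∧ ρ ∉ Φ j := by simpa [phiW] using h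
  exact ⟨j, by rw [payoff_eq_false_iff.2 hj, hv]; decide⟩

lemma pref_payoff_of_not_mem_phiW_union_phiL {i : Fin n} (hi : payoff Φ ρ i = v i)
    (h : ρ ∉ phiW Φ v ∪ phiL Φ v) : Pref i v (payoff Φ ρ) :=
  Or.inr ⟨hi.symm, payoff_le_of_not_mem_phiL fun h' => h (Or.inr h'),
    exists_payoff_lt_of_not_mem_phiW fun h' => h (Or.inl h')⟩

lemma pref_payoff_of_winner {w : Fin n} (hw : v w = true)
    (h : ρ ∉ phiW Φ v ∪ phiL Φ v ∪ (Φ w)ᶜ) : Pref w v (payoff Φ ρ) :=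
  pref_payoff_of_not_mem_phiW_union_phiL
    (by rw [hw, payoff_eq_true_iff]; exact not_not.1 fun h' => h (Or.inr h'))
    fun h' => h (Or.inl h')

lemma pref_payoff_of_loser {l : Fin n} (hl : v l = false)
    (h : ρ ∉ (phiW Φ v ∪ phiL Φ v) ∩ (Φ l)ᶜ) : Pref l v (payoff Φ ρ) := by
  by_cases hρ : ρ ∈ Φ l
  · exact Or.inl (by rw [hl, payoff_eq_true_iff.2 hρ]; decide)
  · exact pref_payoff_of_not_mem_phiW_union_phiL (by rw [hl, payoff_eq_false_iff.2 hρ])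
      fun h' => h ⟨h', hρ⟩

end Payoff

/-- Profitable deviation outside `A_v`: from any `s ∉ A_v` some player `i` has a strategy
that, against every strategy profile of the other players, yields a payoff profile that `i`
prefers to `v`. -/
theorem profitable_deviation_of_not_mem_Av {n : ℕ} {S : Type*} [Fintype S]
    (A : Arena n S) (Φ : Fin n → Set (ℕ → S)) (hM : ∀ i, IsMuller (Φ i))
    (v : Fin n → Bool) (s : S) (hs : s ∉ A.Av Φ v) :
    ∃ i : Fin n, ∃ σ' : List S → S → S, A.IsStrategy σ' ∧
      ∀ σ : Fin n → List S → S → S, (∀ j, j ≠ i → A.IsStrategy (σ j)) →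
        Pref i v (payoff Φ (A.outcome (Function.update σ i σ') s)) := by
  have hW : IsMuller (phiW Φ v) := isMuller_biInter fun i _ => hM i
  have hL : IsMuller (phiL Φ v) := isMuller_biUnion fun i _ => hM i
  simp only [Arena.Av, mem_inter_iff, not_and_or, mem_iInter, not_forall, mem_ofPred_eq] at hs
  rcases hs with ⟨w, hw, hsw⟩ | ⟨l, hl, hsl⟩
  · obtain ⟨σ', hσ', hdev⟩ :=
      A.exists_deviation_of_not_mem_win ((hW.union hL).union (hM w).compl) hsw
    exact ⟨w, σ', hσ', fun σ hσ => pref_payoff_of_winner hw (hdev σ hσ)⟩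
  · obtain ⟨σ', hσ', hdev⟩ :=
      A.exists_deviation_of_not_mem_win ((hW.union hL).inter (hM l).compl) hsl
    exact ⟨l, σ', hσ', fun σ hσ => pref_payoff_of_loser hl (hdev σ hσ)⟩
end

section
/- (Rabin representation of the retaliation objective against a winner, co-Büchi case.) Let S be a finite nonempty set, let (C_i)_{i∈[1,n]} be subsets of S, let W, L partition [1,n], and let w ∈ W. Set C_W = ⋃_{i∈W} C_i. Then ⋂_{i∈W} coBüchi(C_i) ∪ ⋃_{l∈L} coBüchi(C_l) ∪ Büchi(C_w) = Rabin(R) for R = {(S, C_W)} ∪ {(S, C_l) | l ∈ L} ∪ {(C_w, ∅)}. -/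

lemma infOcc_nonempty {S : Type*} [Finite S] [Nonempty S] (ρ : ℕ → S) :
    (infOcc ρ).Nonempty := by
  obtain ⟨t, ht⟩ := Finite.exists_infinite_fiber ρ
  refine ⟨t, fun N => ?_⟩
  have : (ρ ⁻¹' {t}).Infinite := Set.infinite_coe_iff.mp ht
  obtain ⟨k, hk, hk'⟩ := this.exists_gt N
  exact ⟨k, le_of_lt hk', hk⟩

/-- Rabin representation of the retaliation objective against a winner (co-Büchi case):
`⋂_{i∈W} coBüchi(C_i) ∪ ⋃_{l∈L} coBüchi(C_l) ∪ Büchi(C_w)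
  = Rabin({(S, C_W)} ∪ {(S, C_l) | l ∈ L} ∪ {(C_w, ∅)})`. -/
theorem rabin_repr_winner_coBuchi {S : Type*} [Fintype S] [Nonempty S] {n : ℕ}
    (C : Fin n → Set S) (W L : Set (Fin n))
    (hUnion : W ∪ L = Set.univ) (hDisj : W ∩ L = ∅) (w : Fin n) (hw : w ∈ W) :
    (⋂ i ∈ W, CoBuchi (C i)) ∪ (⋃ l ∈ L, CoBuchi (C l)) ∪ Buchi (C w) =
      Rabin ({((Set.univ : Set S), ⋃ i ∈ W, C i)} ∪
        {q : Set S × Set S | ∃ l ∈ L, q = (Set.univ, C l)} ∪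
        {(C w, (∅ : Set S))}) := by
  ext ρ
  have hne : (infOcc ρ).Nonempty := infOcc_nonempty ρ
  simp only [Rabin, Set.mem_union, Set.mem_iUnion, Set.mem_iInter, Set.mem_setOf_eq,
    Set.mem_singleton_iff, Set.mem_inter_iff, Buchi, CoBuchi, Set.inter_empty,
    Set.inter_univ, exists_prop]
  constructor
  · rintro ((h | ⟨l, hl, h⟩) | h)
    · exact ⟨(Set.univ, ⋃ i ∈ W, C i), Or.inl (Or.inl rfl), by simpa using hne, by
        simp only [Set.eq_empty_iff_forall_notMem, Set.mem_inter_iff, Set.mem_iUnion] at h ⊢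
        rintro x ⟨hx, i, hi, hxc⟩
        exact h i hi x ⟨hx, hxc⟩⟩
    · exact ⟨(Set.univ, C l), Or.inl (Or.inr ⟨l, hl, rfl⟩), by simpa using hne, by simpa using h⟩
    · exact ⟨(C w, ∅), Or.inr rfl, by simpa using h, by simp⟩
  · rintro ⟨q, ((hq | ⟨l, hl, hq⟩) | hq), h1, h2⟩ <;> subst hq
    · refine Or.inl (Or.inl ?_)
      intro i hi
      simp only [Set.eq_empty_iff_forall_notMem, Set.mem_inter_iff, Set.mem_iUnion] at h2 ⊢
      rintro x ⟨hx, hxc⟩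
      exact h2 x ⟨hx, i, hi, hxc⟩
    · exact Or.inl (Or.inr ⟨l, hl, by simpa using h2⟩)
    · exact Or.inr (by simpa using h1)
end
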